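/- Let Γ ⊆ ℤ² and φ a state on Γ. If v₁,…,v_m and u₁,…,u_k are two finite legal toppling sequences for φ with toppling count functions H¹ and H², then there exists a finite legal toppling sequence for φ whose toppling count function equals the pointwise maximum v ↦ max(H¹(v), H²(v)). (Merging of relaxations.) -/
import Mathlib


/-- The discrete Laplacian on `ℤ × ℤ`: sum over the four grid neighbors minus `4` times
the value at the point. -/
def lap (H : ℤ × ℤ → ℤ) (v : ℤ × ℤ) : ℤ :=
  H (v.1 + 1, v.2) + H (v.1 - 1, v.2) + H (v.1, v.2 + 1) + H (v.1, v.2 - 1) - 4 * H v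

/-- `topCount s i u` is the number of indices `j < i` with `s j = u`
(the toppling count after `i` steps). -/
def topCount (s : ℕ → ℤ × ℤ) (i : ℕ) (u : ℤ × ℤ) : ℤ :=
  (((Finset.range i).filter (fun j => s j = u)).card : ℤ)

/-- The first `m` terms of `s` form a legal toppling sequence for the state `φ` on `Γ`:
each toppled vertex lies in `Γ` and is unstable (has ≥ 4 grains) at the moment of toppling. -/
def Legal (Γ : Set (ℤ × ℤ)) (φ : ℤ × ℤ → ℤ) (s : ℕ → ℤ × ℤ) (m : ℕ) : Prop :=
  ∀ i < m, s i ∈ Γ ∧ 4 ≤ φ (s i) + lap (topCount s i) (s i)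



lemma topCount_nonneg (s : ℕ → ℤ × ℤ) (i : ℕ) (v : ℤ × ℤ) : 0 ≤ topCount s i v :=
  Int.natCast_nonneg _

lemma topCount_zero (s : ℕ → ℤ × ℤ) (v : ℤ × ℤ) : topCount s 0 v = 0 := by
  simp [topCount]

lemma topCount_succ (s : ℕ → ℤ × ℤ) (i : ℕ) (v : ℤ × ℤ) :
    topCount s (i + 1) v = topCount s i v + if s i = v then 1 else 0 := by
  unfold topCount
  rw [Finset.range_add_one, Finset.filter_insert]
  split
  · rw [Finset.card_insert_of_notMem (by simp)]
    push_cast; ring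
  · simp

lemma topCount_congr (s s' : ℕ → ℤ × ℤ) (i : ℕ) (h : ∀ j < i, s j = s' j) (v : ℤ × ℤ) :
    topCount s i v = topCount s' i v := by
  unfold topCount
  congr 2
  apply Finset.filter_congr
  intro j hj
  rw [h j (Finset.mem_range.mp hj)]

lemma lap_congr (H H' : ℤ × ℤ → ℤ) (h : ∀ v, H v = H' v) (v : ℤ × ℤ) : lap H v = lap H' v := by
  simp only [lap, h]

lemma lap_mono_at (H H' : ℤ × ℤ → ℤ) (w : ℤ × ℤ) (h : ∀ v, H v ≤ H' v) (hw : H' w = H w) :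
    lap H w ≤ lap H' w := by
  have h1 := h (w.1 + 1, w.2)
  have h2 := h (w.1 - 1, w.2)
  have h3 := h (w.1, w.2 + 1)
  have h4 := h (w.1, w.2 - 1)
  unfold lap
  rw [hw]
  linarith

/-- Merging of relaxations: given two finite legal toppling sequences for a state `φ` on `Γ`,
there is a finite legal toppling sequence whose toppling count function is the pointwise
maximum of the two toppling count functions. -/
theorem merge_relaxations (Γ : Set (ℤ × ℤ)) (φ : ℤ × ℤ → ℤ)
    (hφ0 : ∀ v, 0 ≤ φ v) (hφΓ : ∀ v, v ∉ Γ → φ v = 0)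
    (s t : ℕ → ℤ × ℤ) (m k : ℕ)
    (hs : Legal Γ φ s m) (ht : Legal Γ φ t k) :
    ∃ (u : ℕ → ℤ × ℤ) (n : ℕ), Legal Γ φ u n ∧
      ∀ v, topCount u n v = max (topCount s m v) (topCount t k v) := by
  classical
  set p : ℕ → Prop := fun j => j < k ∧ topCount s m (t j) ≤ topCount t j (t j) with hp_def
  have hfin : (setOf p).Finite := Set.Finite.subset (Set.finite_Iio k) fun j hj => hj.1
  set K := hfin.toFinset.card with hK
  set e : ℕ → ℕ := Nat.nth p with he
  -- Lemma A: the running-max identity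
  have hA : ∀ j ≤ k, ∀ v, topCount s m v +
      (((Finset.range j).filter (fun j' => p j' ∧ t j' = v)).card : ℤ)
      = max (topCount s m v) (topCount t j v) := by
    intro j
    induction j with
    | zero =>
      intro _ v
      simp [topCount_zero, max_eq_left (topCount_nonneg s m v)]
    | succ j ih =>
      intro hj v
      have hjk : j < k := hj
      have ihv := ih (Nat.le_of_succ_le hj) v
      rw [Finset.range_add_one, Finset.filter_insert, topCount_succ]
      by_cases hv : t j = v
      · subst hv
        rw [if_pos rfl]
        by_cases hpj : p j
        · have hle : topCount s m (t j) ≤ topCount t j (t j) := hpj.2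
          rw [if_pos (⟨hpj, rfl⟩ : p j ∧ t j = t j), Finset.card_insert_of_notMem (by simp)]
          rw [max_eq_right hle] at ihv
          rw [max_eq_right (by linarith)]
          push_cast
          linarith
        · have hlt : topCount t j (t j) < topCount s m (t j) := by
            by_contra hcon
            exact hpj ⟨hjk, le_of_not_gt hcon⟩
          rw [if_neg (fun h => hpj h.1 : ¬(p j ∧ t j = t j))]
          rw [max_eq_left hlt.le] at ihv
          rw [max_eq_left (by linarith)]
          linarith
      · rw [if_neg (by tauto), if_neg hv]
        simpa using ihv
  -- Lemma B: count conversion along the enumeration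
  have hB : ∀ r ≤ K, ∀ b : ℕ, (∀ r' < r, e r' < b) →
      (∀ j, p j → j < b → ∃ r' < r, e r' = j) → ∀ v,
      ((Finset.range r).filter (fun r' => t (e r') = v)).card
      = ((Finset.range b).filter (fun j => p j ∧ t j = v)).card := by
    intro r hr b hb1 hb2 v
    apply Finset.card_bij (fun r' _ => e r')
    · intro r' hr'
      simp only [Finset.mem_filter, Finset.mem_range] at hr' ⊢
      exact ⟨hb1 r' hr'.1, Nat.nth_mem_of_lt_card hfin (lt_of_lt_of_le hr'.1 hr), hr'.2⟩
    · intro r1 h1 r2 h2 hee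
      simp only [Finset.mem_filter, Finset.mem_range] at h1 h2
      exact Nat.nth_injOn hfin (lt_of_lt_of_le h1.1 hr) (lt_of_lt_of_le h2.1 hr) hee
    · intro j hj
      simp only [Finset.mem_filter, Finset.mem_range] at hj
      obtain ⟨r', hr', herj⟩ := hb2 j hj.2.1 hj.1
      refine ⟨r', ?_, herj⟩
      simp only [Finset.mem_filter, Finset.mem_range]
      exact ⟨hr', by rw [herj]; exact hj.2.2⟩
  -- the merged sequence
  set u : ℕ → ℤ × ℤ := fun i => if i < m then s i else t (e (i - m)) with hu
  have hum : ∀ i ≤ m, ∀ v, topCount u i v = topCount s i v := by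
    intro i hi v
    apply topCount_congr
    intro j hj
    simp only [hu, if_pos (lt_of_lt_of_le hj hi)]
  have huE : ∀ r, u (m + r) = t (e r) := by
    intro r
    simp only [hu]
    rw [if_neg (by omega), show m + r - m = r by omega]
  -- Lemma C: counts of u
  have hC : ∀ r, ∀ v, topCount u (m + r) v = topCount s m v +
      (((Finset.range r).filter (fun r' => t (e r') = v)).card : ℤ) := by
    intro r
    induction r with
    | zero => intro v; simpa using hum m le_rfl v
    | succ r ih =>
      intro v
      rw [show m + (r + 1) = (m + r) + 1 by ring, topCount_succ, ih, huE,
        Finset.range_add_one, Finset.filter_insert]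
      by_cases hv : t (e r) = v
      · rw [if_pos hv, if_pos hv, Finset.card_insert_of_notMem (by simp)]
        push_cast; ring
      · rw [if_neg hv, if_neg hv]; ring
  -- the two instantiations of hB
  have hBr : ∀ r < K, ∀ v, ((Finset.range r).filter (fun r' => t (e r') = v)).card
      = ((Finset.range (e r)).filter (fun j => p j ∧ t j = v)).card := by
    intro r hr v
    apply hB r hr.le (e r)
    · intro r' hr'
      exact Nat.nth_lt_nth_of_lt_card hfin hr' hr
    · intro j hpj hjb
      obtain ⟨r', hr', herj⟩ := Nat.exists_lt_card_finite_nth_eq hfin hpj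
      exact ⟨r', Nat.lt_of_nth_lt_nth_of_lt_card hfin (by rw [herj]; exact hjb) hr', herj⟩
  have hBK : ∀ v, ((Finset.range K).filter (fun r' => t (e r') = v)).card
      = ((Finset.range k).filter (fun j => p j ∧ t j = v)).card := by
    intro v
    apply hB K le_rfl k
    · intro r' hr'
      exact (Nat.nth_mem_of_lt_card hfin hr').1
    · intro j hpj _
      exact Nat.exists_lt_card_finite_nth_eq hfin hpj
  refine ⟨u, m + K, ?_, ?_⟩
  · intro i hi
    by_cases him : i < m
    · have hui : u i = s i := by simp only [hu, if_pos him]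
      have hlap : lap (topCount u i) (s i) = lap (topCount s i) (s i) :=
        lap_congr _ _ (hum i him.le) _
      rw [hui, hlap]
      exact hs i him
    · push_neg at him
      obtain ⟨r, rfl⟩ : ∃ r, i = m + r := ⟨i - m, by omega⟩
      have hrK : r < K := by omega
      have hpe : p (e r) := Nat.nth_mem_of_lt_card hfin hrK
      obtain ⟨hek, hle⟩ := hpe
      have hti := ht (e r) hek
      have hui : u (m + r) = t (e r) := huE r
      have hF : ∀ v, topCount u (m + r) v = max (topCount s m v) (topCount t (e r) v) := by
        intro v
        rw [hC r v, hBr r hrK v]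
        exact hA (e r) hek.le v
      constructor
      · rw [hui]; exact hti.1
      · have hmono : lap (topCount t (e r)) (t (e r)) ≤ lap (topCount u (m + r)) (t (e r)) := by
          apply lap_mono_at
          · intro v; rw [hF v]; exact le_max_right _ _
          · rw [hF (t (e r))]; exact max_eq_right hle
        rw [hui]
        linarith [hti.2]
  · intro v
    rw [hC K v, hBK v, hA k le_rfl v]
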